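/- arXiv:2505.19411 — 2 statements merged into one kernel-verified Lean document; each statement's English description precedes it below -/
import Mathlib

section
/- (Convergence of the forward–backward / proximal-gradient algorithm.) Let g : ℝ^d → ℝ ∪ {+∞} be proper, convex, lower semicontinuous, let h : ℝ^d → ℝ be convex and differentiable with γ-Lipschitz gradient for some γ > 0, and let α ∈ (0, 2/γ). Assume there exist x* ∈ ℝ^d and u ∈ ∂g(x*) with u + ∇h(x*) = 0. Then for any initial point x_1 ∈ ℝ^d, the sequence defined by x_{k+1} = prox_{αg}( x_k − α ∇h(x_k) ) converges to some x̄ ∈ ℝ^d satisfying 0 ∈ ∂g(x̄) + ∇h(x̄); in particular x̄ is a global minimizer of g + h. -/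
/-!
Extended-real-valued functions ℝ^d → ℝ ∪ {+∞} are modeled as maps into `EReal`
that never take the value ⊥.

The forward–backward map `T = prox_{αg} ∘ (I - α∇h)` composes a firmly nonexpansive map (the prox,
by monotonicity of `∂g`) with a map that, by the Baillon–Haddad cocoercivity of `∇h`, shrinks
squared distances by `α (2/γ - α) ‖∇h x - ∇h y‖²`. Hence `T` is nonexpansive, its fixed points are
exactly the zeros of `∂g + ∇h`, and for every fixed point `p` the iterates satisfy
`‖x_{k+1} - p‖² + c ‖x_{k+1} - x_k‖² ≤ ‖x_k - p‖²`, so `x_{k+1} - x_k → 0`. In finite dimension a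
cluster point of the bounded iterates is then a fixed point, and Fejér monotonicity with respect to
it upgrades subsequential convergence to convergence of the whole sequence.
-/

open scoped RealInnerProductSpace
open Filter Topology Function

noncomputable section FB

section Fejer

variable {X : Type*}

theorem tendsto_dist_succ_of_sq_dist_add_le [PseudoMetricSpace X] {x : ℕ → X} {p : X} {c : ℝ}
    (hc : 0 < c)
    (h : ∀ k, dist (x (k + 1)) p ^ 2 + c * dist (x (k + 1)) (x k) ^ 2 ≤ dist (x k) p ^ 2) :
    Tendsto (fun k => dist (x (k + 1)) (x k)) atTop (𝓝 0) := by
  set q := fun k => dist (x k) p ^ 2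
  have hq : Antitone q := antitone_nat_of_succ_le fun k =>
    le_of_add_le_of_nonneg_left (h k) (by positivity)
  obtain ⟨l, hl⟩ : ∃ l, Tendsto q atTop (𝓝 l) :=
    ⟨_, tendsto_atTop_ciInf hq ⟨0, by rintro _ ⟨k, rfl⟩; positivity⟩⟩
  have hdiff : Tendsto (fun k => (q k - q (k + 1)) / c) atTop (𝓝 0) := by
    simpa using (hl.sub (hl.comp (tendsto_add_atTop_nat 1))).div_const c
  have hsq : Tendsto (fun k => dist (x (k + 1)) (x k) ^ 2) atTop (𝓝 0) :=
    squeeze_zero (fun k => sq_nonneg _) (fun k => by rw [le_div_iff₀ hc]; linarith [h k]) hdiff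
  simpa [Real.sqrt_sq dist_nonneg] using hsq.sqrt

theorem LipschitzWith.exists_isFixedPt_tendsto [MetricSpace X] [ProperSpace X] {T : X → X}
    (hT : LipschitzWith 1 T) {x : ℕ → X} (hx : ∀ k, x (k + 1) = T (x k)) {p : X}
    (hp : IsFixedPt T p) (hreg : Tendsto (fun k => dist (x (k + 1)) (x k)) atTop (𝓝 0)) :
    ∃ y, IsFixedPt T y ∧ Tendsto x atTop (𝓝 y) := by
  have hfejer : ∀ q, IsFixedPt T q → Antitone fun k => dist (x k) q := fun q hq =>
    antitone_nat_of_succ_le fun k => by simpa [hx k, hq.eq] using hT.dist_le_mul (x k) q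
  obtain ⟨y, -, φ, hφ, hlim⟩ := (isCompact_closedBall p (dist (x 0) p)).tendsto_subseq
    fun k => Metric.mem_closedBall.2 (hfejer p hp (Nat.zero_le k))
  have hy : IsFixedPt T y := by
    have hT_lim : Tendsto (fun j => x (φ j + 1)) atTop (𝓝 (T y)) := by
      simpa only [hx, comp_def] using (hT.continuous.tendsto y).comp hlim
    have hy_lim : Tendsto (fun j => x (φ j + 1)) atTop (𝓝 y) :=
      hlim.congr_dist (by simpa only [dist_comm, comp_def] using hreg.comp hφ.tendsto_atTop)
    exact tendsto_nhds_unique hT_lim hy_lim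
  refine ⟨y, hy, tendsto_iff_dist_tendsto_zero.2 ?_⟩
  exact (tendsto_iff_tendsto_subseq_of_antitone (hfejer y hy) hφ.tendsto_atTop).2
    (tendsto_iff_dist_tendsto_zero.1 hlim)

end Fejer

theorem le_of_forall_mem_Ioc_le_add_mul {a b c : ℝ}
    (h : ∀ t ∈ Set.Ioc (0 : ℝ) 1, a ≤ b + t * c) : a ≤ b := by
  have hlim : Tendsto (fun t : ℝ => b + t * c) (𝓝[>] 0) (𝓝 b) := by
    have : Tendsto (fun t : ℝ => b + t * c) (𝓝 0) (𝓝 (b + 0 * c)) :=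
      (continuous_const.add (continuous_id.mul continuous_const)).tendsto 0
    simpa using this.mono_left nhdsWithin_le_nhds
  exact ge_of_tendsto hlim (eventually_of_mem (Ioc_mem_nhdsGT one_pos) h)

section Operators

variable {E : Type*} [NormedAddCommGroup E]

def IsProx (g : E → EReal) (α : ℝ) (prox : E → E) : Prop :=
  ∀ x z, g (prox x) + ((1 / (2 * α) * ‖prox x - x‖ ^ 2 : ℝ) : EReal) ≤
    g z + ((1 / (2 * α) * ‖z - x‖ ^ 2 : ℝ) : EReal)

theorem IsProx.ne_top {g : E → EReal} {α : ℝ} {prox : E → E} (hprox : IsProx g α prox)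
    (hg_proper : ∃ x, g x ≠ ⊤) (w : E) : g (prox w) ≠ ⊤ := by
  obtain ⟨z, hz⟩ := hg_proper
  intro htop
  have := hprox w z
  rw [htop, EReal.top_add_coe, top_le_iff] at this
  exact EReal.add_ne_top hz (EReal.coe_ne_top _) this

variable [InnerProductSpace ℝ E]

def bregmanDiv (f : E → ℝ) (f' : E → E) (x y : E) : ℝ := f x - f y - ⟪f' y, x - y⟫

section Smooth

variable [CompleteSpace E] {f : E → ℝ} {f' : E → E}

theorem hasDerivAt_comp_lineMap (hf : ∀ x, HasGradientAt f (f' x) x) (x y : E) (t : ℝ) :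
    HasDerivAt (fun s => f (AffineMap.lineMap x y s)) ⟪f' (AffineMap.lineMap x y t), y - x⟫ t :=
  (hf _).hasFDerivAt.comp_hasDerivAt t AffineMap.hasDerivAt_lineMap

theorem ConvexOn.bregmanDiv_nonneg (hfc : ConvexOn ℝ Set.univ f)
    (hf : ∀ x, HasGradientAt f (f' x) x) (x y : E) : 0 ≤ bregmanDiv f f' x y := by
  have hline : ConvexOn ℝ Set.univ (fun s : ℝ => f (AffineMap.lineMap y x s)) :=
    hfc.comp_affineMap (AffineMap.lineMap y x)
  have := hline.le_slope_of_hasDerivAt (Set.mem_univ 0) (Set.mem_univ 1) one_pos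
    (hasDerivAt_comp_lineMap hf y x 0)
  simp only [slope_def_field, AffineMap.lineMap_apply_zero, AffineMap.lineMap_apply_one,
    sub_zero, div_one] at this
  simp only [bregmanDiv]
  linarith

theorem bregmanDiv_le {L : ℝ} (hf : ∀ x, HasGradientAt f (f' x) x)
    (hL : ∀ x y, ‖f' x - f' y‖ ≤ L * ‖x - y‖) (x y : E) :
    bregmanDiv f f' x y ≤ L / 2 * ‖x - y‖ ^ 2 := by
  set ψ : ℝ → ℝ := fun t =>
    f (AffineMap.lineMap y x t) - t * ⟪f' y, x - y⟫ - L / 2 * t ^ 2 * ‖x - y‖ ^ 2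
  have hψ : ∀ t, HasDerivAt ψ (⟪f' (AffineMap.lineMap y x t), x - y⟫ - ⟪f' y, x - y⟫
      - L * t * ‖x - y‖ ^ 2) t := by
    intro t
    have := ((hasDerivAt_comp_lineMap hf y x t).sub
      ((hasDerivAt_id' t).mul_const ⟪f' y, x - y⟫)).sub
      (((hasDerivAt_pow 2 t).const_mul (L / 2)).mul_const (‖x - y‖ ^ 2))
    exact this.congr_deriv (by push_cast; ring)
  have hanti : AntitoneOn ψ (Set.Ici 0) := by
    refine antitoneOn_of_deriv_nonpos (convex_Ici 0)
      (fun t _ => (hψ t).continuousAt.continuousWithinAt)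
      (fun t _ => (hψ t).differentiableAt.differentiableWithinAt) fun t ht => ?_
    rw [interior_Ici, Set.mem_Ioi] at ht
    rw [(hψ t).deriv, ← inner_sub_left, sub_nonpos]
    have hdist : ‖AffineMap.lineMap y x t - y‖ = t * ‖x - y‖ := by
      rw [AffineMap.lineMap_apply_module', add_sub_cancel_right, norm_smul,
        Real.norm_of_nonneg ht.le]
    calc ⟪f' (AffineMap.lineMap y x t) - f' y, x - y⟫
        ≤ ‖f' (AffineMap.lineMap y x t) - f' y‖ * ‖x - y‖ := real_inner_le_norm _ _
      _ ≤ L * (t * ‖x - y‖) * ‖x - y‖ := by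
          rw [← hdist]; exact mul_le_mul_of_nonneg_right (hL _ _) (norm_nonneg _)
      _ = L * t * ‖x - y‖ ^ 2 := by ring
  have := hanti (Set.mem_Ici.2 le_rfl) (Set.mem_Ici.2 zero_le_one) zero_le_one
  simp only [ψ, AffineMap.lineMap_apply_zero, AffineMap.lineMap_apply_one] at this
  simp only [bregmanDiv]
  linarith

theorem ConvexOn.sq_norm_sub_div_le_bregmanDiv {L : ℝ} (hL0 : 0 < L)
    (hfc : ConvexOn ℝ Set.univ f) (hf : ∀ x, HasGradientAt f (f' x) x)
    (hL : ∀ x y, ‖f' x - f' y‖ ≤ L * ‖x - y‖) (x y : E) :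
    ‖f' x - f' y‖ ^ 2 / (2 * L) ≤ bregmanDiv f f' x y := by
  -- `z` is the gradient step from `x` for `f - ⟪f' y, ·⟫`, a function minimised at `y`
  set z := x - L⁻¹ • (f' x - f' y)
  have hz := ConvexOn.bregmanDiv_nonneg hfc hf z y
  have hdesc := bregmanDiv_le hf hL z x
  have hzx : z - x = -(L⁻¹ • (f' x - f' y)) := by simp [z]
  have hsplit : bregmanDiv f f' z y
      = bregmanDiv f f' x y + bregmanDiv f f' z x + ⟪f' x - f' y, z - x⟫ := by
    simp only [bregmanDiv, inner_sub_left, inner_sub_right]; ring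
  rw [hzx, inner_neg_right, real_inner_smul_right, real_inner_self_eq_norm_sq] at hsplit
  rw [hzx, norm_neg, norm_smul, Real.norm_of_nonneg (inv_nonneg.2 hL0.le)] at hdesc
  rw [hsplit] at hz
  have : L / 2 * (L⁻¹ * ‖f' x - f' y‖) ^ 2 - L⁻¹ * ‖f' x - f' y‖ ^ 2
      = -(‖f' x - f' y‖ ^ 2 / (2 * L)) := by field_simp; ring
  linarith

theorem ConvexOn.sq_norm_sub_div_le_inner {L : ℝ} (hL0 : 0 < L)
    (hfc : ConvexOn ℝ Set.univ f) (hf : ∀ x, HasGradientAt f (f' x) x)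
    (hL : ∀ x y, ‖f' x - f' y‖ ≤ L * ‖x - y‖) (x y : E) :
    ‖f' x - f' y‖ ^ 2 / L ≤ ⟪f' x - f' y, x - y⟫ := by
  have hxy := hfc.sq_norm_sub_div_le_bregmanDiv hL0 hf hL x y
  have hyx := hfc.sq_norm_sub_div_le_bregmanDiv hL0 hf hL y x
  have hsum : bregmanDiv f f' x y + bregmanDiv f f' y x = ⟪f' x - f' y, x - y⟫ := by
    simp only [bregmanDiv, inner_sub_left, inner_sub_right]; ring
  rw [norm_sub_rev] at hyx
  have : ‖f' x - f' y‖ ^ 2 / L = 2 * (‖f' x - f' y‖ ^ 2 / (2 * L)) := by field_simp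
  linarith

end Smooth

theorem sq_norm_sub_smul_sub_le {G : E → E} {L α : ℝ} (hα : 0 ≤ α)
    (hG : ∀ x y, ‖G x - G y‖ ^ 2 / L ≤ ⟪G x - G y, x - y⟫) (x y : E) :
    ‖(x - α • G x) - (y - α • G y)‖ ^ 2 ≤ ‖x - y‖ ^ 2 - α * (2 / L - α) * ‖G x - G y‖ ^ 2 := by
  have hsplit : (x - α • G x) - (y - α • G y) = (x - y) - α • (G x - G y) := by
    rw [smul_sub]; abel
  rw [hsplit, norm_sub_sq_real, real_inner_smul_right, norm_smul, Real.norm_of_nonneg hα,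
    real_inner_comm]
  have := mul_le_mul_of_nonneg_left (hG x y) (by positivity : (0:ℝ) ≤ 2 * α)
  have hscale : 2 * α * (‖G x - G y‖ ^ 2 / L) = α * (2 / L) * ‖G x - G y‖ ^ 2 := by ring
  linarith

def HasSubgradientAt (g : E → EReal) (u x : E) : Prop :=
  ∀ z, g x + ((⟪u, z - x⟫ : ℝ) : EReal) ≤ g z

structure IsProperConvex (g : E → EReal) : Prop where
  ne_bot : ∀ x, g x ≠ ⊥
  exists_ne_top : ∃ x, g x ≠ ⊤
  convex : ∀ x y : E, ∀ t : ℝ, 0 ≤ t → t ≤ 1 →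
    g (t • x + (1 - t) • y) ≤ (t : EReal) * g x + ((1 - t : ℝ) : EReal) * g y

def forwardBackward (prox G : E → E) (α : ℝ) (x : E) : E := prox (x - α • G x)

section Prox

variable {g : E → EReal}

theorem HasSubgradientAt.inner_sub_nonneg {u v x y : E} (hu : HasSubgradientAt g u x)
    (hv : HasSubgradientAt g v y) (hx : g x ≠ ⊤) (hx' : g x ≠ ⊥) :
    0 ≤ ⟪u - v, x - y⟫ := by
  obtain ⟨a, ha⟩ : ∃ a : ℝ, g x = a := ⟨_, (EReal.coe_toReal hx hx').symm⟩
  have hchain := (add_le_add (hu y) le_rfl).trans (hv x)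
  rw [ha, ← EReal.coe_add, ← EReal.coe_add, EReal.coe_le_coe_iff] at hchain
  have : ⟪u - v, x - y⟫ = -(⟪u, y - x⟫ + ⟪v, x - y⟫) := by
    rw [inner_sub_left, ← neg_sub x y, inner_neg_right]; ring
  linarith

theorem HasSubgradientAt.add_le_add_of_hasGradientAt [CompleteSpace E] {f : E → ℝ} {f' : E → E}
    {x : E} (hg : HasSubgradientAt g (-f' x) x) (hfc : ConvexOn ℝ Set.univ f)
    (hf : ∀ x, HasGradientAt f (f' x) x) (z : E) :
    g x + (f x : EReal) ≤ g z + (f z : EReal) := by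
  have hfz : f x + ⟪f' x, z - x⟫ ≤ f z := by
    have := hfc.bregmanDiv_nonneg hf z x
    simp only [bregmanDiv] at this
    linarith
  calc g x + (f x : EReal)
      = g x + ((⟪-f' x, z - x⟫ : ℝ) : EReal) + ((f x + ⟪f' x, z - x⟫ : ℝ) : EReal) := by
        rw [add_assoc, ← EReal.coe_add, inner_neg_left]; ring_nf
    _ ≤ g z + (f z : EReal) := add_le_add (hg z) (EReal.coe_le_coe_iff.2 hfz)

variable {α : ℝ} {prox : E → E}

theorem IsProx.hasSubgradientAt (hprox : IsProx g α prox) (hα : 0 < α)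
    (hg : IsProperConvex g) (w : E) :
    HasSubgradientAt g (α⁻¹ • (w - prox w)) (prox w) := by
  intro z
  set p := prox w
  rcases eq_or_ne (g z) ⊤ with hz | hz
  · simp [hz]
  obtain ⟨a, ha⟩ : ∃ a : ℝ, g p = a :=
    ⟨_, (EReal.coe_toReal (hprox.ne_top hg.exists_ne_top w) (hg.ne_bot p)).symm⟩
  obtain ⟨b, hb⟩ : ∃ b : ℝ, g z = b := ⟨_, (EReal.coe_toReal hz (hg.ne_bot z)).symm⟩
  rw [ha, hb, ← EReal.coe_add, EReal.coe_le_coe_iff]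
  set c := 1 / (2 * α)
  -- test the minimality of `p` against the segment `[p, z]`, then let the point tend to `p`
  have hseg : ∀ t ∈ Set.Ioc (0 : ℝ) 1,
      t * a ≤ t * b + c * (2 * t * ⟪p - w, z - p⟫ + t ^ 2 * ‖z - p‖ ^ 2) := by
    rintro t ⟨ht0, ht1⟩
    have hconv := hg.convex z p t ht0.le ht1
    rw [ha, hb, ← EReal.coe_mul, ← EReal.coe_mul, ← EReal.coe_add] at hconv
    have hmin := (hprox w (t • z + (1 - t) • p)).trans (add_le_add hconv le_rfl)
    rw [ha, ← EReal.coe_add, ← EReal.coe_add, EReal.coe_le_coe_iff] at hmin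
    have hexp : ‖t • z + (1 - t) • p - w‖ ^ 2
        = ‖p - w‖ ^ 2 + 2 * t * ⟪p - w, z - p⟫ + t ^ 2 * ‖z - p‖ ^ 2 := by
      rw [show t • z + (1 - t) • p - w = (p - w) + t • (z - p) by module, norm_add_sq_real,
        real_inner_smul_right, norm_smul, mul_pow, Real.norm_eq_abs, sq_abs]
      ring
    rw [hexp] at hmin
    linarith
  have hinner : ⟪α⁻¹ • (w - p), z - p⟫ = -(2 * c) * ⟪p - w, z - p⟫ := by
    rw [real_inner_smul_left, ← neg_sub p w, inner_neg_left]
    simp only [c]; field_simp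
  rw [hinner]
  refine le_of_forall_mem_Ioc_le_add_mul (c := c * ‖z - p‖ ^ 2) fun t ht => ?_
  have := hseg t ht
  nlinarith [ht.1]

theorem IsProx.sq_norm_sub_add_sq_norm_sub_le (hprox : IsProx g α prox) (hα : 0 < α)
    (hg : IsProperConvex g) (a b : E) :
    ‖prox a - prox b‖ ^ 2 + ‖(a - prox a) - (b - prox b)‖ ^ 2 ≤ ‖a - b‖ ^ 2 := by
  have hmono := (hprox.hasSubgradientAt hα hg a).inner_sub_nonneg (hprox.hasSubgradientAt hα hg b)
    (hprox.ne_top hg.exists_ne_top a) (hg.ne_bot _)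
  rw [← smul_sub, real_inner_smul_left] at hmono
  have hinner := nonneg_of_mul_nonneg_right hmono (inv_pos.2 hα)
  rw [show a - b = (prox a - prox b) + ((a - prox a) - (b - prox b)) by abel, norm_add_sq_real,
    real_inner_comm]
  linarith

theorem IsProx.isFixedPt_forwardBackward (hprox : IsProx g α prox) (hα : 0 < α)
    (hg : IsProperConvex g) {G : E → E} {x u : E} (hu : HasSubgradientAt g u x)
    (hux : u + G x = 0) : IsFixedPt (forwardBackward prox G α) x := by
  set w := x - α • G x
  have hmono := (hprox.hasSubgradientAt hα hg w).inner_sub_nonneg hu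
    (hprox.ne_top hg.exists_ne_top w) (hg.ne_bot _)
  have hres : α⁻¹ • (w - prox w) - u = α⁻¹ • (x - prox w) := by
    rw [eq_neg_of_add_eq_zero_left hux,
      show w - prox w = (x - prox w) - α • G x by simp only [w]; abel,
      smul_sub, smul_smul, inv_mul_cancel₀ hα.ne', one_smul, sub_neg_eq_add, sub_add_cancel]
  rw [hres, real_inner_smul_left, ← neg_sub x, inner_neg_right,
    real_inner_self_eq_norm_sq] at hmono
  have hsq : ‖x - prox w‖ ^ 2 ≤ 0 := by nlinarith [inv_pos.2 hα]
  have hdist : ‖x - prox w‖ = 0 := by nlinarith [norm_nonneg (x - prox w)]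
  exact (sub_eq_zero.1 (norm_eq_zero.1 hdist)).symm

theorem IsProx.hasSubgradientAt_of_isFixedPt (hprox : IsProx g α prox) (hα : 0 < α)
    (hg : IsProperConvex g) {G : E → E} {x : E} (hx : IsFixedPt (forwardBackward prox G α) x) :
    HasSubgradientAt g (-G x) x := by
  have := hprox.hasSubgradientAt hα hg (x - α • G x)
  rwa [show prox (x - α • G x) = x from hx, sub_sub_cancel_left, smul_neg, smul_smul,
    inv_mul_cancel₀ hα.ne', one_smul] at this

end Prox

section ForwardBackward

variable {P G : E → E} {α β : ℝ}

theorem lipschitzWith_one_forwardBackward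
    (hP : ∀ a b, ‖P a - P b‖ ^ 2 + ‖(a - P a) - (b - P b)‖ ^ 2 ≤ ‖a - b‖ ^ 2) (hβ : 0 ≤ β)
    (hG : ∀ x y, ‖(x - α • G x) - (y - α • G y)‖ ^ 2 ≤ ‖x - y‖ ^ 2 - β * ‖G x - G y‖ ^ 2) :
    LipschitzWith 1 (forwardBackward P G α) := by
  refine LipschitzWith.of_dist_le_mul fun x y => ?_
  rw [NNReal.coe_one, one_mul, dist_eq_norm, dist_eq_norm,
    ← pow_le_pow_iff_left₀ (norm_nonneg _) (norm_nonneg _) two_ne_zero]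
  have hfirm := hP (x - α • G x) (y - α • G y)
  have hforward := hG x y
  have := mul_nonneg hβ (sq_nonneg ‖G x - G y‖)
  have := sq_nonneg ‖(x - α • G x - P (x - α • G x)) - (y - α • G y - P (y - α • G y))‖
  simp only [forwardBackward]
  linarith

theorem sq_norm_forwardBackward_sub_add_le (hα : 0 < α) (hβ : 0 < β)
    (hP : ∀ a b, ‖P a - P b‖ ^ 2 + ‖(a - P a) - (b - P b)‖ ^ 2 ≤ ‖a - b‖ ^ 2)
    (hG : ∀ x y, ‖(x - α • G x) - (y - α • G y)‖ ^ 2 ≤ ‖x - y‖ ^ 2 - β * ‖G x - G y‖ ^ 2)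
    {p : E} (hp : IsFixedPt (forwardBackward P G α) p) (x : E) :
    ‖forwardBackward P G α x - p‖ ^ 2 + min 1 (β / α ^ 2) / 2 * ‖forwardBackward P G α x - x‖ ^ 2
      ≤ ‖x - p‖ ^ 2 := by
  set c := min 1 (β / α ^ 2) / 2
  set y := forwardBackward P G α x
  set e := ((x - α • G x) - y) - ((p - α • G p) - p)
  have hfirm : ‖y - p‖ ^ 2 + ‖e‖ ^ 2 ≤ ‖(x - α • G x) - (p - α • G p)‖ ^ 2 := by
    have := hP (x - α • G x) (p - α • G p)
    rwa [show P (p - α • G p) = p from hp] at this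
  have hstep : ‖y - x‖ ^ 2 ≤ 2 * ‖e‖ ^ 2 + 2 * α ^ 2 * ‖G x - G p‖ ^ 2 := by
    have hsplit : y - x = -e - α • (G x - G p) := by simp only [e, smul_sub]; abel
    have hpar := parallelogram_law_with_norm ℝ (-e) (α • (G x - G p))
    rw [norm_smul, Real.norm_of_nonneg hα.le, norm_neg] at hpar
    rw [hsplit]
    nlinarith [sq_nonneg ‖-e + α • (G x - G p)‖]
  have hc1 : 2 * c ≤ 1 := by simp only [c]; linarith [min_le_left 1 (β / α ^ 2)]
  have hc2 : 2 * c * α ^ 2 ≤ β := by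
    have := mul_le_mul_of_nonneg_right (min_le_right 1 (β / α ^ 2)) (sq_nonneg α)
    rw [div_mul_cancel₀ _ (by positivity)] at this
    simp only [c]; linarith
  have hc0 : 0 ≤ c := by positivity
  have h1 := mul_le_mul_of_nonneg_left hstep hc0
  have h2 := mul_le_mul_of_nonneg_right hc1 (sq_nonneg ‖e‖)
  have h3 := mul_le_mul_of_nonneg_right hc2 (sq_nonneg ‖G x - G p‖)
  linarith [hG x p]

end ForwardBackward

end Operators

theorem statement6_general (d : ℕ)
    (g : EuclideanSpace ℝ (Fin d) → EReal)
    -- g is proper (never −∞, somewhere finite)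
    (hg_ne_bot : ∀ x, g x ≠ ⊥) (hg_proper : ∃ x, g x ≠ ⊤)
    -- g is convex
    (hg_convex : ∀ x y : EuclideanSpace ℝ (Fin d), ∀ t : ℝ, 0 ≤ t → t ≤ 1 →
      g (t • x + (1 - t) • y) ≤ (t : EReal) * g x + ((1 - t : ℝ) : EReal) * g y)
    -- h is convex and differentiable with γ-Lipschitz gradient h'
    (h : EuclideanSpace ℝ (Fin d) → ℝ)
    (hh_convex : ConvexOn ℝ Set.univ h)
    (h' : EuclideanSpace ℝ (Fin d) → EuclideanSpace ℝ (Fin d))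
    (hh_grad : ∀ x, HasGradientAt h (h' x) x)
    (γ : ℝ) (hγ : 0 < γ)
    (hh_lip : ∀ x y, ‖h' x - h' y‖ ≤ γ * ‖x - y‖)
    -- step size α ∈ (0, 2/γ)
    (α : ℝ) (hα0 : 0 < α) (hα2 : α < 2 / γ)
    -- proxg = prox_{αg}: minimizer of z ↦ g(z) + (1/(2α))‖z − x‖²
    (proxg : EuclideanSpace ℝ (Fin d) → EuclideanSpace ℝ (Fin d))
    (hproxg : ∀ x z : EuclideanSpace ℝ (Fin d),
      g (proxg x) + ((1 / (2 * α) * ‖proxg x - x‖ ^ 2 : ℝ) : EReal) ≤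
        g z + ((1 / (2 * α) * ‖z - x‖ ^ 2 : ℝ) : EReal))
    -- there exist x* and u ∈ ∂g(x*) with u + ∇h(x*) = 0
    (xstar ustar : EuclideanSpace ℝ (Fin d))
    (hustar : ∀ z, g xstar + ((⟪ustar, z - xstar⟫ : ℝ) : EReal) ≤ g z)
    (hzero : ustar + h' xstar = 0)
    -- the forward–backward iteration, started from an arbitrary initial point x_1
    (x : ℕ → EuclideanSpace ℝ (Fin d))
    (hx : ∀ k, x (k + 1) = proxg (x k - α • h' (x k))) :
    -- {x_k} converges to some x̄ satisfying 0 ∈ ∂g(x̄) + ∇h(x̄);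
    -- in particular x̄ globally minimizes g + h
    ∃ xbar : EuclideanSpace ℝ (Fin d),
      Tendsto x atTop (𝓝 xbar) ∧
      (∃ u : EuclideanSpace ℝ (Fin d),
        (∀ z, g xbar + ((⟪u, z - xbar⟫ : ℝ) : EReal) ≤ g z) ∧
        u + h' xbar = 0) ∧
      ∀ z, g xbar + ((h xbar : ℝ) : EReal) ≤ g z + ((h z : ℝ) : EReal) := by
  have hg : IsProperConvex g := ⟨hg_ne_bot, hg_proper, hg_convex⟩
  have hβ : 0 < α * (2 / γ - α) := mul_pos hα0 (sub_pos.2 hα2)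
  have hP := IsProx.sq_norm_sub_add_sq_norm_sub_le hproxg hα0 hg
  have hG := sq_norm_sub_smul_sub_le hα0.le (hh_convex.sq_norm_sub_div_le_inner hγ hh_grad hh_lip)
  have hxstar := IsProx.isFixedPt_forwardBackward hproxg hα0 hg hustar hzero
  have hx' : ∀ k, x (k + 1) = forwardBackward proxg h' α (x k) := hx
  have hreg := tendsto_dist_succ_of_sq_dist_add_le
    (x := x) (p := xstar) (c := min 1 (α * (2 / γ - α) / α ^ 2) / 2) (by positivity) fun k => by
      simpa only [hx', dist_eq_norm] using
        sq_norm_forwardBackward_sub_add_le hα0 hβ hP hG hxstar (x k)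
  obtain ⟨xbar, hfix, hlim⟩ :=
    (lipschitzWith_one_forwardBackward hP hβ.le hG).exists_isFixedPt_tendsto hx' hxstar hreg
  have hsub := IsProx.hasSubgradientAt_of_isFixedPt hproxg hα0 hg hfix
  exact ⟨xbar, hlim, ⟨-h' xbar, hsub, neg_add_cancel _⟩,
    hsub.add_le_add_of_hasGradientAt hh_convex hh_grad⟩

theorem statement6 (d : ℕ)
    (g : EuclideanSpace ℝ (Fin d) → EReal)
    -- g is proper (never −∞, somewhere finite)
    (hg_ne_bot : ∀ x, g x ≠ ⊥) (hg_proper : ∃ x, g x ≠ ⊤)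
    -- g is convex
    (hg_convex : ∀ x y : EuclideanSpace ℝ (Fin d), ∀ t : ℝ, 0 ≤ t → t ≤ 1 →
      g (t • x + (1 - t) • y) ≤ (t : EReal) * g x + ((1 - t : ℝ) : EReal) * g y)
    -- g is lower semicontinuous
    (hg_lsc : LowerSemicontinuous g)
    -- h is convex and differentiable with γ-Lipschitz gradient h'
    (h : EuclideanSpace ℝ (Fin d) → ℝ)
    (hh_convex : ConvexOn ℝ Set.univ h)
    (h' : EuclideanSpace ℝ (Fin d) → EuclideanSpace ℝ (Fin d))
    (hh_grad : ∀ x, HasGradientAt h (h' x) x)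
    (γ : ℝ) (hγ : 0 < γ)
    (hh_lip : ∀ x y, ‖h' x - h' y‖ ≤ γ * ‖x - y‖)
    -- step size α ∈ (0, 2/γ)
    (α : ℝ) (hα0 : 0 < α) (hα2 : α < 2 / γ)
    -- proxg = prox_{αg}: minimizer of z ↦ g(z) + (1/(2α))‖z − x‖²
    (proxg : EuclideanSpace ℝ (Fin d) → EuclideanSpace ℝ (Fin d))
    (hproxg : ∀ x z : EuclideanSpace ℝ (Fin d),
      g (proxg x) + ((1 / (2 * α) * ‖proxg x - x‖ ^ 2 : ℝ) : EReal) ≤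
        g z + ((1 / (2 * α) * ‖z - x‖ ^ 2 : ℝ) : EReal))
    -- there exist x* and u ∈ ∂g(x*) with u + ∇h(x*) = 0
    (xstar ustar : EuclideanSpace ℝ (Fin d))
    (hustar : ∀ z, g xstar + ((⟪ustar, z - xstar⟫ : ℝ) : EReal) ≤ g z)
    (hzero : ustar + h' xstar = 0)
    -- the forward–backward iteration, started from an arbitrary initial point x_1
    (x : ℕ → EuclideanSpace ℝ (Fin d))
    (hx : ∀ k, x (k + 1) = proxg (x k - α • h' (x k))) :
    -- {x_k} converges to some x̄ satisfying 0 ∈ ∂g(x̄) + ∇h(x̄);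
    -- in particular x̄ globally minimizes g + h
    ∃ xbar : EuclideanSpace ℝ (Fin d),
      Tendsto x atTop (𝓝 xbar) ∧
      (∃ u : EuclideanSpace ℝ (Fin d),
        (∀ z, g xbar + ((⟪u, z - xbar⟫ : ℝ) : EReal) ≤ g z) ∧
        u + h' xbar = 0) ∧
      ∀ z, g xbar + ((h xbar : ℝ) : EReal) ≤ g z + ((h z : ℝ) : EReal) :=
  statement6_general d g hg_ne_bot hg_proper hg_convex h hh_convex h' hh_grad γ hγ hh_lip α hα0 hα2
    proxg hproxg xstar ustar hustar hzero x hx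

end FB
end

section
/- (Convergence of cyclic projections onto convex sets.) Let C_1, …, C_s be closed convex subsets of ℝ^d with nonempty intersection C = C_1 ∩ ⋯ ∩ C_s. Then for every initial point x_1 ∈ ℝ^d, the cyclic projection sequence x_{k+1} = P_{C_s}( P_{C_{s−1}}( ⋯ P_{C_1}(x_k) ⋯ ) ) converges to some point belonging to C. -/
/-!
A metric projection onto a convex set `K` satisfies `‖P y - c‖² + ‖y - P y‖² ≤ ‖y - c‖²` for
every `c ∈ K` (the angle at `P y` between `y` and `c` is obtuse). Chaining this along one sweep,
the iterates are Fejér monotone with respect to the intersection, and the squared lengths of the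
individual projection steps are bounded by the decrease of `‖x_k - c‖²`, which tends to `0`.
Hence along a convergent subsequence (the iterates are bounded) all intermediate points of a sweep
have the same limit `z`, which therefore lies in every `C_i`; Fejér monotonicity with respect to
`z` turns subsequential convergence into convergence.
-/

open Filter Topology

def IsMetricProjection {X : Type*} [PseudoMetricSpace X] (K : Set X) (x p : X) : Prop :=
  p ∈ K ∧ ∀ y ∈ K, dist x p ≤ dist x y

open RealInnerProductSpace in
theorem IsMetricProjection.dist_sq_add_dist_sq_le {E : Type*} [NormedAddCommGroup E]
    [InnerProductSpace ℝ E] {K : Set E} {x p c : E} (hp : IsMetricProjection K x p)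
    (hK : Convex ℝ K) (hc : c ∈ K) :
    dist p c ^ 2 + dist x p ^ 2 ≤ dist x c ^ 2 := by
  have : Nonempty K := ⟨⟨p, hp.1⟩⟩
  have hinf : ‖x - p‖ = ⨅ w : K, ‖x - w‖ :=
    le_antisymm (le_ciInf fun w => by simpa only [dist_eq_norm] using hp.2 w w.2)
      (ciInf_le (f := fun w : K => ‖x - w‖) ⟨0, by rintro _ ⟨w, rfl⟩; positivity⟩ ⟨p, hp.1⟩)
  have hobtuse : ⟪x - p, c - p⟫ ≤ 0 :=
    (norm_eq_iInf_iff_real_inner_le_zero hK hp.1).mp hinf c hc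
  have hsplit : x - c = (x - p) - (c - p) := by abel
  rw [dist_comm p c]
  simp only [dist_eq_norm]
  rw [hsplit, norm_sub_sq_real (x - p) (c - p)]
  linarith

section Telescoping

variable {X : Type*} [PseudoMetricSpace X] {f : ℕ → X} {c : X} {n : ℕ}

theorem dist_sq_add_sum_dist_sq_le
    (hstep : ∀ i < n, dist (f (i + 1)) c ^ 2 + dist (f i) (f (i + 1)) ^ 2 ≤ dist (f i) c ^ 2) :
    dist (f n) c ^ 2 + ∑ i ∈ Finset.range n, dist (f i) (f (i + 1)) ^ 2 ≤ dist (f 0) c ^ 2 := by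
  induction n with
  | zero => simp
  | succ n ih =>
    have hlast := hstep n n.lt_succ_self
    have hinit := ih fun i hi => hstep i (hi.trans n.lt_succ_self)
    rw [Finset.sum_range_succ]
    linarith

theorem dist_le_dist_of_dist_sq_add_dist_sq_le
    (hstep : ∀ i < n, dist (f (i + 1)) c ^ 2 + dist (f i) (f (i + 1)) ^ 2 ≤ dist (f i) c ^ 2) :
    dist (f n) c ≤ dist (f 0) c := by
  have hsum := dist_sq_add_sum_dist_sq_le hstep
  have hnonneg : 0 ≤ ∑ i ∈ Finset.range n, dist (f i) (f (i + 1)) ^ 2 :=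
    Finset.sum_nonneg fun _ _ => sq_nonneg _
  exact (pow_le_pow_iff_left₀ dist_nonneg dist_nonneg two_ne_zero).mp (by linarith)

theorem dist_sq_le_mul_dist_sq_sub
    (hstep : ∀ i < n, dist (f (i + 1)) c ^ 2 + dist (f i) (f (i + 1)) ^ 2 ≤ dist (f i) c ^ 2)
    {j : ℕ} (hj : j ≤ n) :
    dist (f 0) (f j) ^ 2 ≤ j * (dist (f 0) c ^ 2 - dist (f n) c ^ 2) := by
  have hsum : ∑ i ∈ Finset.range j, dist (f i) (f (i + 1)) ^ 2 ≤
      ∑ i ∈ Finset.range n, dist (f i) (f (i + 1)) ^ 2 :=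
    Finset.sum_le_sum_of_subset_of_nonneg (Finset.range_subset_range.mpr hj)
      fun _ _ _ => sq_nonneg _
  calc dist (f 0) (f j) ^ 2
      ≤ (∑ i ∈ Finset.range j, dist (f i) (f (i + 1))) ^ 2 := by
        gcongr; exact dist_le_range_sum_dist f j
    _ ≤ j * ∑ i ∈ Finset.range j, dist (f i) (f (i + 1)) ^ 2 := by
        simpa using sq_sum_le_card_mul_sum_sq (s := Finset.range j)
          (f := fun i => dist (f i) (f (i + 1)))
    _ ≤ j * (dist (f 0) c ^ 2 - dist (f n) c ^ 2) := by
        gcongr; linarith [dist_sq_add_sum_dist_sq_le hstep]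

end Telescoping

theorem tendsto_sub_succ_of_antitone {u : ℕ → ℝ} (hu : Antitone u)
    (hbdd : BddBelow (Set.range u)) : Tendsto (fun k => u k - u (k + 1)) atTop (𝓝 0) := by
  have hlim := tendsto_atTop_ciInf hu hbdd
  simpa using hlim.sub (hlim.comp (tendsto_add_atTop_nat 1))

theorem tendsto_nhds_zero_of_sq_le {α : Type*} {l : Filter α} {f g : α → ℝ}
    (hf : ∀ a, 0 ≤ f a) (hfg : ∀ a, f a ^ 2 ≤ g a) (hg : Tendsto g l (𝓝 0)) :
    Tendsto f l (𝓝 0) := by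
  have hsqrt : Tendsto (fun a => √(g a)) l (𝓝 0) := by simpa using hg.sqrt
  refine tendsto_of_tendsto_of_tendsto_of_le_of_le tendsto_const_nhds hsqrt hf fun a => ?_
  exact (Real.le_sqrt (hf a) ((sq_nonneg _).trans (hfg a))).mpr (hfg a)

theorem tendsto_of_antitone_dist_of_tendsto_comp {X : Type*} [PseudoMetricSpace X] {x : ℕ → X}
    {z : X} (hanti : Antitone fun k => dist (x k) z) {φ : ℕ → ℕ}
    (hφ : Tendsto (x ∘ φ) atTop (𝓝 z)) : Tendsto x atTop (𝓝 z) := by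
  refine Metric.tendsto_atTop.mpr fun ε hε => ?_
  obtain ⟨n, hn⟩ := (hφ.eventually (Metric.ball_mem_nhds z hε)).exists
  exact ⟨φ n, fun k hk => (hanti hk).trans_lt hn⟩

section Sweep

variable {ι E : Type*}

def partialSweep (l : List ι) (P : ι → E → E) (j : ℕ) (y : E) : E :=
  (l.take j).foldl (fun y i => P i y) y

variable {l : List ι} {P : ι → E → E}

@[simp]
theorem partialSweep_zero (y : E) : partialSweep l P 0 y = y := rfl

theorem partialSweep_succ {j : ℕ} (hj : j < l.length) (y : E) :
    partialSweep l P (j + 1) y = P l[j] (partialSweep l P j y) := by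
  rw [partialSweep, partialSweep, List.take_add_one, List.getElem?_eq_getElem hj,
    Option.toList_some, List.foldl_concat]

theorem partialSweep_length (y : E) :
    partialSweep l P l.length y = l.foldl (fun y i => P i y) y := by
  rw [partialSweep, List.take_length]

theorem dist_partialSweep_sq_add_dist_sq_le [NormedAddCommGroup E] [InnerProductSpace ℝ E]
    {C : ι → Set E} (hconvex : ∀ i, Convex ℝ (C i))
    (hP : ∀ i y, IsMetricProjection (C i) y (P i y)) {c : E} (hc : c ∈ ⋂ i ∈ l, C i) (y : E)
    {j : ℕ} (hj : j < l.length) :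
    dist (partialSweep l P (j + 1) y) c ^ 2 +
        dist (partialSweep l P j y) (partialSweep l P (j + 1) y) ^ 2 ≤
      dist (partialSweep l P j y) c ^ 2 := by
  rw [partialSweep_succ hj]
  exact (hP _ _).dist_sq_add_dist_sq_le (hconvex _)
    (Set.mem_iInter₂.mp hc _ (List.getElem_mem hj))

end Sweep

theorem exists_tendsto_of_cyclic_projections {ι E : Type*} [NormedAddCommGroup E] [InnerProductSpace ℝ E]
    [FiniteDimensional ℝ E] {C : ι → Set E} (hclosed : ∀ i, IsClosed (C i))
    (hconvex : ∀ i, Convex ℝ (C i)) {l : List ι} (hint : (⋂ i ∈ l, C i).Nonempty)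
    {P : ι → E → E} (hP : ∀ i y, IsMetricProjection (C i) y (P i y)) {x : ℕ → E}
    (hx : ∀ k, x (k + 1) = l.foldl (fun y i => P i y) (x k)) :
    ∃ z ∈ ⋂ i ∈ l, C i, Tendsto x atTop (𝓝 z) := by
  have hstep := fun c (hc : c ∈ ⋂ i ∈ l, C i) k =>
    fun j (hj : j < l.length) => dist_partialSweep_sq_add_dist_sq_le hconvex hP hc (x k) hj
  have hend : ∀ k, partialSweep l P l.length (x k) = x (k + 1) := fun k => by
    rw [partialSweep_length, hx]
  have hfejer : ∀ c ∈ ⋂ i ∈ l, C i, Antitone fun k => dist (x k) c := by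
    refine fun c hc => antitone_nat_of_succ_le fun k => ?_
    simpa [hend] using dist_le_dist_of_dist_sq_add_dist_sq_le
      (f := fun j => partialSweep l P j (x k)) (hstep c hc k)
  obtain ⟨c, hc⟩ := hint
  have hsweep_short : ∀ j ≤ l.length,
      Tendsto (fun k => dist (x k) (partialSweep l P j (x k))) atTop (𝓝 0) := by
    intro j hj
    have hgap := tendsto_sub_succ_of_antitone (u := fun k => dist (x k) c ^ 2)
      (fun _ _ h => pow_le_pow_left₀ dist_nonneg (hfejer c hc h) 2)
      ⟨0, by rintro _ ⟨k, rfl⟩; positivity⟩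
    refine tendsto_nhds_zero_of_sq_le (fun _ => dist_nonneg) (fun k => ?_)
      (by simpa using hgap.const_mul (j : ℝ))
    simpa [hend] using dist_sq_le_mul_dist_sq_sub
      (f := fun j => partialSweep l P j (x k)) (hstep c hc k) hj
  obtain ⟨z, -, φ, hφ, hzφ⟩ := tendsto_subseq_of_bounded (Metric.isBounded_closedBall (x := c))
    fun k => Metric.mem_closedBall.mpr (hfejer c hc k.zero_le)
  have hz : z ∈ ⋂ i ∈ l, C i := by
    refine Set.mem_iInter₂.mpr fun i hi => ?_
    obtain ⟨j, hj, rfl⟩ := List.mem_iff_getElem.mp hi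
    have hlim : Tendsto (fun n => partialSweep l P (j + 1) (x (φ n))) atTop (𝓝 z) :=
      hzφ.congr_dist ((hsweep_short (j + 1) hj).comp hφ.tendsto_atTop)
    refine (hclosed _).mem_of_tendsto hlim (Eventually.of_forall fun n => ?_)
    rw [partialSweep_succ hj]
    exact (hP _ _).1
  exact ⟨z, hz, tendsto_of_antitone_dist_of_tendsto_comp (hfejer z hz) hzφ⟩

theorem statement8_general (d s : ℕ)
    (C : Fin s → Set (EuclideanSpace ℝ (Fin d)))
    (hC_closed : ∀ i, IsClosed (C i))
    (hC_convex : ∀ i, Convex ℝ (C i))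
    -- the intersection C = C_1 ∩ ⋯ ∩ C_s is nonempty
    (hint : (⋂ i, C i).Nonempty)
    -- P i is the Euclidean (metric) projection onto C i
    (P : Fin s → EuclideanSpace ℝ (Fin d) → EuclideanSpace ℝ (Fin d))
    (hP : ∀ i x, P i x ∈ C i ∧ ∀ y ∈ C i, dist x (P i x) ≤ dist x y)
    -- the cyclic projection sequence: x_{k+1} = P_{C_s}(P_{C_{s−1}}(⋯ P_{C_1}(x_k) ⋯))
    (x : ℕ → EuclideanSpace ℝ (Fin d))
    (hx : ∀ k, x (k + 1) = (List.finRange s).foldl (fun y i => P i y) (x k)) :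
    -- {x_k} converges to some point of the intersection
    ∃ xbar ∈ ⋂ i, C i, Tendsto x atTop (𝓝 xbar) := by
  have hfull : ⋂ i ∈ List.finRange s, C i = ⋂ i, C i := by simp
  rw [← hfull] at hint ⊢
  exact exists_tendsto_of_cyclic_projections hC_closed hC_convex hint hP hx

theorem statement8 (d s : ℕ) (hs : 0 < s)
    (C : Fin s → Set (EuclideanSpace ℝ (Fin d)))
    (hC_closed : ∀ i, IsClosed (C i))
    (hC_convex : ∀ i, Convex ℝ (C i))
    (hC_nonempty : ∀ i, (C i).Nonempty)
    -- the intersection C = C_1 ∩ ⋯ ∩ C_s is nonempty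
    (hint : (⋂ i, C i).Nonempty)
    -- P i is the Euclidean (metric) projection onto C i
    (P : Fin s → EuclideanSpace ℝ (Fin d) → EuclideanSpace ℝ (Fin d))
    (hP : ∀ i x, P i x ∈ C i ∧ ∀ y ∈ C i, dist x (P i x) ≤ dist x y)
    -- the cyclic projection sequence: x_{k+1} = P_{C_s}(P_{C_{s−1}}(⋯ P_{C_1}(x_k) ⋯))
    (x : ℕ → EuclideanSpace ℝ (Fin d))
    (hx : ∀ k, x (k + 1) = (List.finRange s).foldl (fun y i => P i y) (x k)) :
    -- {x_k} converges to some point of the intersection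
    ∃ xbar ∈ ⋂ i, C i, Tendsto x atTop (𝓝 xbar) :=
  statement8_general d s C hC_closed hC_convex hint P hP x hx
end
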